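/- Fix data (y_i,x_i)_{i=1}^n, tau > 0, beta* supported on a set of size s, and scalars lambda > 0, phi_0 > 0, gamma_u > 1, L_0 > 0, A > 0. Assume the gradient Lipschitz condition ||grad L_hat_tau(beta_1) - grad L_hat_tau(beta_2)||_inf <= L_0*||beta_1 - beta_2||_2 for all beta_1, beta_2 in R^d. Let beta^{(0)} = 0 and for each k >= 1 let phi^{(k)} in [phi_0, gamma_u*L_0] and let beta^{(k)} minimize beta |-> F(beta; phi^{(k)}, beta^{(k-1)}) + lambda*||beta||_1, with the local majorization F(beta^{(k)}; phi^{(k)}, beta^{(k-1)}) >= L_hat_tau(beta^{(k)}). Suppose some minimizer beta_hat of beta |-> L_hat_tau(beta) + lambda*||beta||_1 satisfies ||beta_hat - beta*||_2 <= A*sqrt(s)*lambda. Then there exists a constant C_1 > 0, depending only on A and on the ratio gamma_u*L_0/phi_0, such that for every eps_c > 0 and every integer k >= C_1 * L_0^2 * (1+gamma_u)^2 * (||beta*||_2 + sqrt(s)*lambda)^2 / eps_c^2, the iterate beta^{(k)} satisfies omega_lambda(beta^{(k)}) <= eps_c. -/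

import Mathlib

set_option autoImplicit false

open MeasureTheory ProbabilityTheory Filter

noncomputable section

/-- The Huber loss with robustification parameter `τ`. -/
def huber (τ x : ℝ) : ℝ := if |x| ≤ τ then x ^ 2 / 2 else τ * |x| - τ ^ 2 / 2

/-- The derivative of the Huber loss. -/
def huberDeriv (τ x : ℝ) : ℝ := if |x| ≤ τ then x else τ * Real.sign x

/-- Empirical Huber loss `L̂_τ(β) = n⁻¹ ∑ᵢ ℓ_τ(yᵢ - ⟨xᵢ, β⟩)`. -/
def empLoss {n d : ℕ} (y : Fin n → ℝ) (X : Fin n → Fin d → ℝ) (τ : ℝ)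
    (β : Fin d → ℝ) : ℝ :=
  (n : ℝ)⁻¹ * ∑ i, huber τ (y i - ∑ j, X i j * β j)

/-- Gradient of the empirical Huber loss:
`∇L̂_τ(β) = -n⁻¹ ∑ᵢ ℓ'_τ(yᵢ - ⟨xᵢ, β⟩) xᵢ`. -/
def empGrad {n d : ℕ} (y : Fin n → ℝ) (X : Fin n → Fin d → ℝ) (τ : ℝ)
    (β : Fin d → ℝ) : Fin d → ℝ :=
  fun j => -(n : ℝ)⁻¹ * ∑ i, huberDeriv τ (y i - ∑ j', X i j' * β j') * X i j

/-- ℓ¹ norm on `Fin d → ℝ`. -/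
def norm1 {d : ℕ} (v : Fin d → ℝ) : ℝ := ∑ j, |v j|

/-- Euclidean (ℓ²) norm on `Fin d → ℝ`. -/
def norm2 {d : ℕ} (v : Fin d → ℝ) : ℝ := Real.sqrt (∑ j, v j ^ 2)

/-- Sup (ℓ^∞) norm on `Fin d → ℝ`. -/
def normInf {d : ℕ} (v : Fin d → ℝ) : ℝ := ⨆ j, |v j|

/-- The subdifferential of the ℓ¹ norm at `β`. -/
def l1Subdiff {d : ℕ} (β : Fin d → ℝ) : Set (Fin d → ℝ) :=
  {ξ | ∀ j, if β j = 0 then ξ j ∈ Set.Icc (-1 : ℝ) 1 else ξ j = Real.sign (β j)}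

/-- `β` is an `ε`-optimal solution of `min L̂_τ + ‖lam ∘ ·‖₁`:  the suboptimality
measure `ω_lam(β) = min_{ξ ∈ ∂‖β‖₁} ‖∇L̂_τ(β) + lam ∘ ξ‖_∞` is at most `ε`. -/
def IsEpsOptimal {n d : ℕ} (y : Fin n → ℝ) (X : Fin n → Fin d → ℝ) (τ : ℝ)
    (lam : Fin d → ℝ) (ε : ℝ) (β : Fin d → ℝ) : Prop :=
  ∃ ξ ∈ l1Subdiff β, normInf (fun j => empGrad y X τ β j + lam j * ξ j) ≤ ε

/-- The isotropic quadratic majorant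
`F(β; φ, β') = L̂_τ(β') + ⟨∇L̂_τ(β'), β - β'⟩ + (φ/2)‖β - β'‖₂²`. -/
def Fmaj {n d : ℕ} (y : Fin n → ℝ) (X : Fin n → Fin d → ℝ) (τ φ : ℝ)
    (βp β : Fin d → ℝ) : ℝ :=
  empLoss y X τ βp + (∑ j, empGrad y X τ βp j * (β j - βp j)) +
    φ / 2 * (norm2 (fun j => β j - βp j)) ^ 2

/-!
Write `Φ = L̂_τ + λ‖·‖₁`. A LAMM step minimizes a `φ_k`-strongly convex penalized majorant, so by
convexity of the Huber loss and the local majorization every `b` satisfies the three-point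
inequality `Φ(β_k) + φ_k/2 ‖b - β_k‖² ≤ Φ(b) + φ_k/2 ‖b - β_{k-1}‖²`. With `b = β_{k-1}` the
objective drops by at least `φ₀/2 ‖β_k - β_{k-1}‖²`; with `b = β̂` the gaps `Φ(β_k) - Φ(β̂)`
telescope to `k (Φ(β_k) - Φ(β̂)) ≤ γ_u L₀/2 ‖β̂‖²`, so `‖β_{k+1} - β_k‖² = O(1/k)`. The optimality
condition of the step gives `ξ ∈ ∂‖β_k‖₁` with
`∇L̂(β_k) + λξ = ∇L̂(β_k) - ∇L̂(β_{k-1}) - φ_k (β_k - β_{k-1})`, of sup norm at most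
`L₀ (1 + γ_u) ‖β_k - β_{k-1}‖₂`; finally `‖β̂‖₂ ≤ (A + 1)(‖β*‖₂ + √s λ)`.
-/

open Topology

lemma Fintype.sum_apply_pi_single {ι N M : Type*} [Fintype ι] [DecidableEq ι] [Zero N]
    [AddCommMonoid M] (f : ι → N → M) (hf : ∀ i, f i 0 = 0) (i : ι) (x : N) :
    ∑ i', f i' ((Pi.single i x : ι → N) i') = f i x := by
  rw [Fintype.sum_eq_single i fun i' hi' => by rw [Pi.single_eq_of_ne hi', hf],
    Pi.single_eq_same]

lemma mul_le_of_mul_sq_le {c r K N ε : ℝ} (hN : 0 < N) (hε : 0 ≤ ε)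
    (hr : N * r ^ 2 ≤ K) (hK : c ^ 2 * K ≤ N * ε ^ 2) : c * r ≤ ε := by
  refine le_of_abs_le (abs_le_of_sq_le_sq ?_ hε)
  refine le_of_mul_le_mul_left ?_ hN
  calc N * (c * r) ^ 2 = c ^ 2 * (N * r ^ 2) := by ring
    _ ≤ c ^ 2 * K := by gcongr
    _ ≤ N * ε ^ 2 := hK

lemma nat_mul_le_of_le_mul_sub {g D : ℕ → ℝ} {c : ℝ} (hg : ∀ k, g (k + 1) ≤ g k)
    (h : ∀ k, g (k + 1) ≤ c * (D k - D (k + 1))) (k : ℕ) : k * g k ≤ c * (D 0 - D k) := by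
  induction k with
  | zero => simp
  | succ k ih =>
    have := mul_le_mul_of_nonneg_left (hg k) (Nat.cast_nonneg (α := ℝ) k)
    push_cast
    linarith [h k]

lemma huber_add_huberDeriv_mul_sub_le {τ : ℝ} (hτ : 0 ≤ τ) (u v : ℝ) :
    huber τ u + huberDeriv τ u * (v - u) ≤ huber τ v := by
  unfold huber huberDeriv
  rcases lt_trichotomy u 0 with hu | rfl | hu
  · simp only [Real.sign_of_neg hu, abs_of_neg hu]
    rcases le_or_gt 0 v with hv | hv
    · simp only [abs_of_nonneg hv]
      split_ifs <;> nlinarith [sq_nonneg (u - v)]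
    · simp only [abs_of_neg hv]
      split_ifs <;> nlinarith [sq_nonneg (u - v)]
  · simp only [abs_zero, hτ, if_true]
    split_ifs <;> nlinarith [abs_nonneg v, sq_abs v]
  · simp only [Real.sign_of_pos hu, abs_of_pos hu]
    rcases le_or_gt 0 v with hv | hv
    · simp only [abs_of_nonneg hv]
      split_ifs <;> nlinarith [sq_nonneg (u - v)]
    · simp only [abs_of_neg hv]
      split_ifs <;> nlinarith [sq_nonneg (u - v)]

section Loss

variable {n d : ℕ} (y : Fin n → ℝ) (X : Fin n → Fin d → ℝ) {τ : ℝ}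

lemma empLoss_add_sum_empGrad_mul_sub_le (hτ : 0 ≤ τ) (a b : Fin d → ℝ) :
    empLoss y X τ a + ∑ j, empGrad y X τ a j * (b j - a j) ≤ empLoss y X τ b := by
  have hgrad : ∑ j, empGrad y X τ a j * (b j - a j) = (n : ℝ)⁻¹ * ∑ i,
      huberDeriv τ (y i - ∑ j, X i j * a j) *
        ((y i - ∑ j, X i j * b j) - (y i - ∑ j, X i j * a j)) := by
    simp only [empGrad, sub_sub_sub_cancel_left, ← Finset.sum_sub_distrib, Finset.mul_sum,
      Finset.sum_mul]
    rw [Finset.sum_comm]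
    exact Finset.sum_congr rfl fun i _ => Finset.sum_congr rfl fun j _ => by ring
  rw [hgrad, empLoss, empLoss, ← mul_add, ← Finset.sum_add_distrib]
  gcongr
  exact huber_add_huberDeriv_mul_sub_le hτ _ _

end Loss

section Norms

variable {d : ℕ}

lemma norm2_sq (v : Fin d → ℝ) : norm2 v ^ 2 = ∑ j, v j ^ 2 :=
  Real.sq_sqrt (Finset.sum_nonneg fun _ _ => sq_nonneg _)

lemma norm2_nonneg (v : Fin d → ℝ) : 0 ≤ norm2 v := Real.sqrt_nonneg _

lemma norm2_eq_norm_toLp (v : Fin d → ℝ) : norm2 v = ‖WithLp.toLp 2 v‖ := by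
  simp [EuclideanSpace.norm_eq, norm2, Real.norm_eq_abs, sq_abs]

lemma norm2_add_le (u v : Fin d → ℝ) : norm2 (u + v) ≤ norm2 u + norm2 v := by
  simpa only [norm2_eq_norm_toLp, WithLp.toLp_add] using norm_add_le _ _

lemma norm2_le_add_of_norm2_sub_le {u v : Fin d → ℝ} {r : ℝ}
    (h : norm2 (fun j => u j - v j) ≤ r) : norm2 u ≤ r + norm2 v := by
  have : norm2 u ≤ norm2 (fun j => u j - v j) + norm2 v := by
    convert norm2_add_le (fun j => u j - v j) v
    ext j
    simp
  linarith

lemma abs_le_norm2 (v : Fin d → ℝ) (j : Fin d) : |v j| ≤ norm2 v := by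
  rw [← Real.sqrt_sq_eq_abs]
  exact Real.sqrt_le_sqrt <|
    Finset.single_le_sum (f := fun j => v j ^ 2) (fun _ _ => sq_nonneg _) (Finset.mem_univ j)

lemma normInf_le {v : Fin d → ℝ} {c : ℝ} (hc : 0 ≤ c) (h : ∀ j, |v j| ≤ c) : normInf v ≤ c :=
  Real.iSup_le h hc

lemma abs_le_normInf (v : Fin d → ℝ) (j : Fin d) : |v j| ≤ normInf v :=
  le_ciSup (f := fun j => |v j|) (Set.finite_range _).bddAbove j

lemma eq_of_sum_sq_sub_nonpos {u v : Fin d → ℝ} (h : ∑ j, (u j - v j) ^ 2 ≤ 0) : u = v :=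
  funext fun j => by
    have := (Finset.single_le_sum (f := fun j => (u j - v j) ^ 2) (fun _ _ => sq_nonneg _)
      (Finset.mem_univ j)).trans h
    nlinarith [sq_nonneg (u j - v j)]

end Norms

section Majorant

variable {n d : ℕ} (y : Fin n → ℝ) (X : Fin n → Fin d → ℝ) (τ φ : ℝ)

lemma Fmaj_self (p : Fin d → ℝ) : Fmaj y X τ φ p p = empLoss y X τ p := by
  simp [Fmaj, norm2]

lemma Fmaj_eq_add (p u b : Fin d → ℝ) :
    Fmaj y X τ φ p b = Fmaj y X τ φ p u
      + ∑ j, (empGrad y X τ p j + φ * (u j - p j)) * (b j - u j)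
      + φ / 2 * ∑ j, (b j - u j) ^ 2 := by
  have h := Finset.sum_congr rfl fun j (_ : j ∈ Finset.univ) =>
    show empGrad y X τ p j * (b j - p j) + φ / 2 * (b j - p j) ^ 2
      = empGrad y X τ p j * (u j - p j) + φ / 2 * (u j - p j) ^ 2
        + (empGrad y X τ p j + φ * (u j - p j)) * (b j - u j) + φ / 2 * (b j - u j) ^ 2 by ring
  simp only [Finset.sum_add_distrib, ← Finset.mul_sum] at h
  simp only [Fmaj, norm2_sq]
  linarith

lemma Fmaj_le_empLoss_add (hτ : 0 ≤ τ) (p b : Fin d → ℝ) :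
    Fmaj y X τ φ p b ≤ empLoss y X τ b + φ / 2 * ∑ j, (b j - p j) ^ 2 := by
  rw [Fmaj, norm2_sq]
  linarith [empLoss_add_sum_empGrad_mul_sub_le y X hτ p b]

end Majorant

section Subdifferential

lemma nonneg_of_forall_mul_add_mul_sq_nonneg {a b δ : ℝ} (hδ : 0 < δ)
    (h : ∀ t, 0 < t → t < δ → 0 ≤ a * t + b * t ^ 2) : 0 ≤ a := by
  have hlim : Tendsto (fun t => a + b * t) (𝓝[>] 0) (𝓝 a) :=
    ((by fun_prop : Continuous fun t : ℝ => a + b * t).tendsto' 0 a (by simp)).mono_left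
      nhdsWithin_le_nhds
  refine ge_of_tendsto hlim ?_
  filter_upwards [Ioo_mem_nhdsGT hδ] with t ⟨ht, htδ⟩
  exact nonneg_of_mul_nonneg_right (by nlinarith [h t ht htδ]) ht

lemma abs_add_sub_abs_of_abs_lt {c t : ℝ} (h : |t| < |c|) :
    |c + t| - |c| = Real.sign c * t := by
  rcases lt_trichotomy c 0 with hc | rfl | hc
  · rw [abs_of_neg hc] at h
    rw [Real.sign_of_neg hc, abs_of_neg hc, abs_of_neg (by linarith [le_abs_self t])]
    ring
  · exact absurd h (by simp)
  · rw [abs_of_pos hc] at h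
    rw [Real.sign_of_pos hc, abs_of_pos hc, abs_of_pos (by linarith [neg_abs_le t])]
    ring

lemma exists_subdiff_abs_of_forall_nonneg {g b lam c : ℝ} (hlam : 0 < lam)
    (h : ∀ t, 0 ≤ g * t + b * t ^ 2 + lam * (|c + t| - |c|)) :
    ∃ ξ, (if c = 0 then ξ ∈ Set.Icc (-1 : ℝ) 1 else ξ = Real.sign c) ∧ lam * ξ = -g := by
  by_cases hc : c = 0
  · subst hc
    have hpos : 0 ≤ g + lam :=
      nonneg_of_forall_mul_add_mul_sq_nonneg (b := b) one_pos fun t ht _ => by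
        have := h t
        rw [zero_add, abs_zero, sub_zero, abs_of_pos ht] at this
        linarith
    have hneg : 0 ≤ lam - g :=
      nonneg_of_forall_mul_add_mul_sq_nonneg (b := b) one_pos fun t ht _ => by
        have := h (-t)
        rw [zero_add, abs_zero, sub_zero, abs_neg, abs_of_pos ht] at this
        linarith
    refine ⟨-g / lam, ?_, by field_simp⟩
    rw [if_pos rfl, Set.mem_Icc, le_div_iff₀ hlam, div_le_iff₀ hlam]
    constructor <;> linarith
  · have hc' : 0 < |c| := abs_pos.mpr hc
    have hpos : 0 ≤ g + lam * Real.sign c :=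
      nonneg_of_forall_mul_add_mul_sq_nonneg (b := b) hc' fun t ht htc => by
        have := h t
        rw [abs_add_sub_abs_of_abs_lt (by rwa [abs_of_pos ht])] at this
        linarith
    have hneg : 0 ≤ -(g + lam * Real.sign c) :=
      nonneg_of_forall_mul_add_mul_sq_nonneg (b := b) hc' fun t ht htc => by
        have := h (-t)
        rw [abs_add_sub_abs_of_abs_lt (by rwa [abs_neg, abs_of_pos ht])] at this
        linarith
    exact ⟨Real.sign c, by rw [if_neg hc], by linarith⟩

lemma mul_sub_le_abs_sub_abs {c ξ : ℝ}
    (h : if c = 0 then ξ ∈ Set.Icc (-1 : ℝ) 1 else ξ = Real.sign c) (b : ℝ) :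
    ξ * (b - c) ≤ |b| - |c| := by
  split_ifs at h with hc
  · subst hc
    rw [sub_zero, abs_zero, sub_zero]
    calc ξ * b ≤ |ξ| * |b| := by rw [← abs_mul]; exact le_abs_self _
      _ ≤ 1 * |b| := by gcongr; exact abs_le.mpr h
      _ = |b| := one_mul _
  · subst h
    rcases lt_or_gt_of_ne hc with hc | hc
    · rw [Real.sign_of_neg hc, abs_of_neg hc]; linarith [neg_abs_le b]
    · rw [Real.sign_of_pos hc, abs_of_pos hc]; linarith [le_abs_self b]

lemma sum_mul_sub_le_norm1_sub {d : ℕ} {u ξ : Fin d → ℝ} (hξ : ξ ∈ l1Subdiff u)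
    (b : Fin d → ℝ) : ∑ j, ξ j * (b j - u j) ≤ norm1 b - norm1 u := by
  rw [norm1, norm1, ← Finset.sum_sub_distrib]
  exact Finset.sum_le_sum fun j _ => mul_sub_le_abs_sub_abs (hξ j) (b j)

end Subdifferential

def penLoss {n d : ℕ} (y : Fin n → ℝ) (X : Fin n → Fin d → ℝ) (τ lam : ℝ) (b : Fin d → ℝ) : ℝ :=
  empLoss y X τ b + lam * norm1 b

section ProximalStep

variable {n d : ℕ} (y : Fin n → ℝ) (X : Fin n → Fin d → ℝ) {τ lam φ : ℝ} {p u : Fin d → ℝ}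

lemma exists_l1Subdiff_of_forall_Fmaj_le (hlam : 0 < lam)
    (hmin : ∀ b, Fmaj y X τ φ p u + lam * norm1 u ≤ Fmaj y X τ φ p b + lam * norm1 b) :
    ∃ ξ ∈ l1Subdiff u, ∀ j, lam * ξ j = -(empGrad y X τ p j + φ * (u j - p j)) := by
  set v : Fin d → ℝ := fun j => empGrad y X τ p j + φ * (u j - p j)
  have key : ∀ j t, 0 ≤ v j * t + φ / 2 * t ^ 2 + lam * (|u j + t| - |u j|) := by
    intro j t
    set e : Fin d → ℝ := Pi.single j t
    have hexp := Fmaj_eq_add y X τ φ p u (u + e)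
    simp only [Pi.add_apply, add_sub_cancel_left] at hexp
    have hlin : ∑ j', v j' * e j' = v j * t :=
      Fintype.sum_apply_pi_single (fun j' s => v j' * s) (fun _ => mul_zero _) j t
    have hsq : ∑ j', e j' ^ 2 = t ^ 2 :=
      Fintype.sum_apply_pi_single (fun _ s => s ^ 2) (fun _ => zero_pow two_ne_zero) j t
    have hnorm1 : norm1 (u + e) - norm1 u = |u j + t| - |u j| := by
      rw [norm1, norm1, ← Finset.sum_sub_distrib]
      exact Fintype.sum_apply_pi_single (fun j' s => |u j' + s| - |u j'|) (by simp) j t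
    rw [hlin, hsq] at hexp
    linear_combination hmin (u + e) + hexp + lam * hnorm1
  choose ξ hξ using fun j => exists_subdiff_abs_of_forall_nonneg hlam (key j)
  exact ⟨ξ, fun j => (hξ j).1, fun j => (hξ j).2⟩

lemma Fmaj_add_sq_le_of_forall_Fmaj_le (hlam : 0 < lam)
    (hmin : ∀ b, Fmaj y X τ φ p u + lam * norm1 u ≤ Fmaj y X τ φ p b + lam * norm1 b)
    (b : Fin d → ℝ) :
    Fmaj y X τ φ p u + lam * norm1 u + φ / 2 * ∑ j, (b j - u j) ^ 2
      ≤ Fmaj y X τ φ p b + lam * norm1 b := by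
  obtain ⟨ξ, hξ, hξv⟩ := exists_l1Subdiff_of_forall_Fmaj_le y X hlam hmin
  have hlin : ∑ j, (empGrad y X τ p j + φ * (u j - p j)) * (b j - u j)
      = -(lam * ∑ j, ξ j * (b j - u j)) := by
    rw [Finset.mul_sum, ← Finset.sum_neg_distrib]
    exact Finset.sum_congr rfl fun j _ => by rw [← mul_assoc, hξv j]; ring
  rw [Fmaj_eq_add y X τ φ p u b, hlin]
  nlinarith [sum_mul_sub_le_norm1_sub hξ b]

lemma exists_l1Subdiff_normInf_le {L0 : ℝ} (hL0 : 0 ≤ L0) (hφ : 0 ≤ φ)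
    (hLip : ∀ β1 β2 : Fin d → ℝ, normInf (fun j => empGrad y X τ β1 j - empGrad y X τ β2 j)
      ≤ L0 * norm2 (fun j => β1 j - β2 j))
    (hlam : 0 < lam)
    (hmin : ∀ b, Fmaj y X τ φ p u + lam * norm1 u ≤ Fmaj y X τ φ p b + lam * norm1 b) :
    ∃ ξ ∈ l1Subdiff u, normInf (fun j => empGrad y X τ u j + lam * ξ j)
      ≤ (L0 + φ) * norm2 (fun j => u j - p j) := by
  obtain ⟨ξ, hξ, hξv⟩ := exists_l1Subdiff_of_forall_Fmaj_le y X hlam hmin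
  have hr := norm2_nonneg (fun j => u j - p j)
  refine ⟨ξ, hξ, normInf_le (by positivity) fun j => ?_⟩
  calc |empGrad y X τ u j + lam * ξ j|
      = |(empGrad y X τ u j - empGrad y X τ p j) - φ * (u j - p j)| := by rw [hξv]; ring_nf
    _ ≤ |empGrad y X τ u j - empGrad y X τ p j| + |φ * (u j - p j)| := abs_sub _ _
    _ ≤ L0 * norm2 (fun j => u j - p j) + φ * norm2 (fun j => u j - p j) := by
      rw [abs_mul, abs_of_nonneg hφ]
      gcongr
      · exact (abs_le_normInf _ j).trans (hLip u p)
      · exact abs_le_norm2 (fun j => u j - p j) j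
    _ = (L0 + φ) * norm2 (fun j => u j - p j) := by ring

lemma penLoss_add_sq_le_penLoss (hlam : 0 < lam)
    (hmin : ∀ b, Fmaj y X τ φ p u + lam * norm1 u ≤ Fmaj y X τ φ p b + lam * norm1 b)
    (hmaj : empLoss y X τ u ≤ Fmaj y X τ φ p u) :
    penLoss y X τ lam u + φ / 2 * ∑ j, (u j - p j) ^ 2 ≤ penLoss y X τ lam p := by
  have h := Fmaj_add_sq_le_of_forall_Fmaj_le y X hlam hmin p
  simp only [Fmaj_self, sub_sq_comm (p _)] at h
  rw [penLoss, penLoss]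
  linarith

lemma penLoss_add_sq_le_penLoss_add_sq (hτ : 0 ≤ τ) (hlam : 0 < lam)
    (hmin : ∀ b, Fmaj y X τ φ p u + lam * norm1 u ≤ Fmaj y X τ φ p b + lam * norm1 b)
    (hmaj : empLoss y X τ u ≤ Fmaj y X τ φ p u) (b : Fin d → ℝ) :
    penLoss y X τ lam u + φ / 2 * ∑ j, (b j - u j) ^ 2
      ≤ penLoss y X τ lam b + φ / 2 * ∑ j, (b j - p j) ^ 2 := by
  have h := Fmaj_add_sq_le_of_forall_Fmaj_le y X hlam hmin b
  have hb := Fmaj_le_empLoss_add y X τ φ hτ p b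
  rw [penLoss, penLoss]
  linarith

end ProximalStep

/-- Iterates of LAMM (local adaptive majorize-minimization). -/
def IsLAMMSequence {n d : ℕ} (y : Fin n → ℝ) (X : Fin n → Fin d → ℝ) (τ lam φ0 M : ℝ)
    (β : ℕ → Fin d → ℝ) (φ : ℕ → ℝ) : Prop :=
  ∀ k : ℕ, 1 ≤ k →
    φ0 ≤ φ k ∧ φ k ≤ M ∧
    (∀ b : Fin d → ℝ,
      Fmaj y X τ (φ k) (β (k - 1)) (β k) + lam * norm1 (β k) ≤
        Fmaj y X τ (φ k) (β (k - 1)) b + lam * norm1 b) ∧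
    empLoss y X τ (β k) ≤ Fmaj y X τ (φ k) (β (k - 1)) (β k)

namespace IsLAMMSequence

variable {n d : ℕ} {y : Fin n → ℝ} {X : Fin n → Fin d → ℝ} {τ lam φ0 M : ℝ}
  {β : ℕ → Fin d → ℝ} {φ : ℕ → ℝ}

lemma succ (hs : IsLAMMSequence y X τ lam φ0 M β φ) (k : ℕ) :
    φ0 ≤ φ (k + 1) ∧ φ (k + 1) ≤ M ∧
    (∀ b : Fin d → ℝ,
      Fmaj y X τ (φ (k + 1)) (β k) (β (k + 1)) + lam * norm1 (β (k + 1)) ≤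
        Fmaj y X τ (φ (k + 1)) (β k) b + lam * norm1 b) ∧
    empLoss y X τ (β (k + 1)) ≤ Fmaj y X τ (φ (k + 1)) (β k) (β (k + 1)) := by
  simpa using hs (k + 1) (Nat.le_add_left 1 k)

lemma penLoss_succ_add_le (hs : IsLAMMSequence y X τ lam φ0 M β φ) (hlam : 0 < lam) (k : ℕ) :
    penLoss y X τ lam (β (k + 1)) + φ0 / 2 * ∑ j, (β (k + 1) j - β k j) ^ 2
      ≤ penLoss y X τ lam (β k) := by
  obtain ⟨hφ, -, hmin, hmaj⟩ := hs.succ k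
  have := penLoss_add_sq_le_penLoss y X hlam hmin hmaj
  have : φ0 / 2 * ∑ j, (β (k + 1) j - β k j) ^ 2
      ≤ φ (k + 1) / 2 * ∑ j, (β (k + 1) j - β k j) ^ 2 := by
    gcongr
  linarith

lemma penLoss_succ_le (hs : IsLAMMSequence y X τ lam φ0 M β φ) (hlam : 0 < lam)
    (hφ0 : 0 < φ0) (k : ℕ) : penLoss y X τ lam (β (k + 1)) ≤ penLoss y X τ lam (β k) := by
  have := hs.penLoss_succ_add_le hlam k
  have : 0 ≤ φ0 / 2 * ∑ j, (β (k + 1) j - β k j) ^ 2 := by positivity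
  linarith

variable {βh : Fin d → ℝ}

lemma sq_dist_succ_le (hs : IsLAMMSequence y X τ lam φ0 M β φ) (hτ : 0 ≤ τ) (hlam : 0 < lam)
    (hφ0 : 0 < φ0) (hβh : ∀ b, penLoss y X τ lam βh ≤ penLoss y X τ lam b) (k : ℕ) :
    ∑ j, (βh j - β (k + 1) j) ^ 2 ≤ ∑ j, (βh j - β k j) ^ 2 := by
  obtain ⟨hφ0φ, -, hmin, hmaj⟩ := hs.succ k
  have h := penLoss_add_sq_le_penLoss_add_sq y X hτ hlam hmin hmaj βh
  have hφ : 0 < φ (k + 1) / 2 := by linarith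
  nlinarith [hβh (β (k + 1))]

lemma penLoss_sub_le (hs : IsLAMMSequence y X τ lam φ0 M β φ) (hτ : 0 ≤ τ) (hlam : 0 < lam)
    (hφ0 : 0 < φ0) (hβh : ∀ b, penLoss y X τ lam βh ≤ penLoss y X τ lam b) (k : ℕ) :
    penLoss y X τ lam (β (k + 1)) - penLoss y X τ lam βh
      ≤ M / 2 * (∑ j, (βh j - β k j) ^ 2 - ∑ j, (βh j - β (k + 1) j) ^ 2) := by
  obtain ⟨-, hφM, hmin, hmaj⟩ := hs.succ k
  have h := penLoss_add_sq_le_penLoss_add_sq y X hτ hlam hmin hmaj βh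
  have hD := sub_nonneg.mpr (hs.sq_dist_succ_le hτ hlam hφ0 hβh k)
  have hφM : φ (k + 1) / 2 ≤ M / 2 := by linarith
  nlinarith

lemma nat_mul_penLoss_sub_le (hs : IsLAMMSequence y X τ lam φ0 M β φ) (hτ : 0 ≤ τ)
    (hlam : 0 < lam) (hφ0 : 0 < φ0) (hβh : ∀ b, penLoss y X τ lam βh ≤ penLoss y X τ lam b)
    (k : ℕ) :
    k * (penLoss y X τ lam (β k) - penLoss y X τ lam βh)
      ≤ M / 2 * ∑ j, (βh j - β 0 j) ^ 2 := by
  have h := nat_mul_le_of_le_mul_sub (g := fun k => penLoss y X τ lam (β k) - penLoss y X τ lam βh)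
    (fun k => sub_le_sub_right (hs.penLoss_succ_le hlam hφ0 k) _)
    (hs.penLoss_sub_le hτ hlam hφ0 hβh) k
  have hM : 0 ≤ M / 2 := by linarith [(hs.succ 0).1, (hs.succ 0).2.1]
  have : 0 ≤ M / 2 * ∑ j, (βh j - β k j) ^ 2 := by positivity
  linarith

lemma sq_dist_one_le (hs : IsLAMMSequence y X τ lam φ0 M β φ) (hτ : 0 ≤ τ) (hlam : 0 < lam)
    (hφ0 : 0 < φ0) (hβh : ∀ b, penLoss y X τ lam βh ≤ penLoss y X τ lam b) :
    ∑ j, (β 1 j - β 0 j) ^ 2 ≤ 4 * ∑ j, (βh j - β 0 j) ^ 2 := by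
  have h := hs.sq_dist_succ_le hτ hlam hφ0 hβh 0
  calc ∑ j, (β 1 j - β 0 j) ^ 2
      ≤ ∑ j, (2 * (βh j - β 1 j) ^ 2 + 2 * (βh j - β 0 j) ^ 2) :=
        Finset.sum_le_sum fun j _ => by nlinarith [sq_nonneg (β 1 j + β 0 j - 2 * βh j)]
    _ ≤ 4 * ∑ j, (βh j - β 0 j) ^ 2 := by
        rw [Finset.sum_add_distrib, ← Finset.mul_sum, ← Finset.mul_sum]
        linarith

lemma succ_mul_sq_dist_le (hs : IsLAMMSequence y X τ lam φ0 M β φ) (hτ : 0 ≤ τ)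
    (hlam : 0 < lam) (hφ0 : 0 < φ0) (hβh : ∀ b, penLoss y X τ lam βh ≤ penLoss y X τ lam b)
    (k : ℕ) :
    (k + 1) * ∑ j, (β (k + 1) j - β k j) ^ 2
      ≤ (4 + 2 * (M / φ0)) * ∑ j, (βh j - β 0 j) ^ 2 := by
  have hD0 : 0 ≤ ∑ j, (βh j - β 0 j) ^ 2 := Finset.sum_nonneg fun _ _ => sq_nonneg _
  have hR : 0 ≤ M / φ0 := div_nonneg (by linarith [(hs.succ 0).1, (hs.succ 0).2.1]) hφ0.le
  rcases k with _ | m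
  · have := hs.sq_dist_one_le hτ hlam hφ0 hβh
    push_cast
    nlinarith
  · have hdesc := hs.penLoss_succ_add_le hlam (m + 1)
    have hgap := hs.nat_mul_penLoss_sub_le hτ hlam hφ0 hβh (m + 1)
    have hΔ : 0 ≤ ∑ j, (β (m + 1 + 1) j - β (m + 1) j) ^ 2 :=
      Finset.sum_nonneg fun _ _ => sq_nonneg _
    have hmul : ((m : ℝ) + 1) * (φ0 / 2 * ∑ j, (β (m + 1 + 1) j - β (m + 1) j) ^ 2)
        ≤ M / 2 * ∑ j, (βh j - β 0 j) ^ 2 := by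
      push_cast at hgap
      nlinarith [hβh (β (m + 1 + 1))]
    have hRΔ : ((m : ℝ) + 1) * ∑ j, (β (m + 1 + 1) j - β (m + 1) j) ^ 2
        ≤ M / φ0 * ∑ j, (βh j - β 0 j) ^ 2 := by
      rw [div_mul_eq_mul_div, le_div_iff₀ hφ0]
      linarith
    push_cast
    nlinarith

lemma exists_l1Subdiff_normInf_le (hs : IsLAMMSequence y X τ lam φ0 M β φ) (hlam : 0 < lam)
    (hφ0 : 0 < φ0) {L0 : ℝ} (hL0 : 0 ≤ L0)
    (hLip : ∀ β1 β2 : Fin d → ℝ, normInf (fun j => empGrad y X τ β1 j - empGrad y X τ β2 j)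
      ≤ L0 * norm2 (fun j => β1 j - β2 j)) (k : ℕ) :
    ∃ ξ ∈ l1Subdiff (β (k + 1)), normInf (fun j => empGrad y X τ (β (k + 1)) j + lam * ξ j)
      ≤ (L0 + M) * norm2 (fun j => β (k + 1) j - β k j) := by
  obtain ⟨hφ, hφM, hmin, -⟩ := hs.succ k
  obtain ⟨ξ, hξ, hω⟩ := _root_.exists_l1Subdiff_normInf_le y X hL0 (by linarith) hLip hlam hmin
  exact ⟨ξ, hξ, hω.trans (by gcongr; exact norm2_nonneg _)⟩

lemma exists_l1Subdiff_normInf_le_of_le (hs : IsLAMMSequence y X τ lam φ0 M β φ) (hτ : 0 ≤ τ)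
    (hlam : 0 < lam) (hφ0 : 0 < φ0) (hβh : ∀ b, penLoss y X τ lam βh ≤ penLoss y X τ lam b)
    {L0 : ℝ} (hL0 : 0 ≤ L0)
    (hLip : ∀ β1 β2 : Fin d → ℝ, normInf (fun j => empGrad y X τ β1 j - empGrad y X τ β2 j)
      ≤ L0 * norm2 (fun j => β1 j - β2 j))
    {ε : ℝ} (hε : 0 ≤ ε) {k : ℕ}
    (hk : (L0 + M) ^ 2 * ((4 + 2 * (M / φ0)) * ∑ j, (βh j - β 0 j) ^ 2) ≤ k * ε ^ 2) :
    ∃ ξ ∈ l1Subdiff (β k), normInf (fun j => empGrad y X τ (β k) j + lam * ξ j) ≤ ε := by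
  have hΔ := hs.succ_mul_sq_dist_le hτ hlam hφ0 hβh
  have hω := hs.exists_l1Subdiff_normInf_le hlam hφ0 hL0 hLip
  rcases k with _ | m
  · -- `k = 0` forces the bound to vanish, so the first step does not move
    have hK : (4 + 2 * (M / φ0)) * ∑ j, (βh j - β 0 j) ^ 2 ≤ 0 := by
      have hM : 0 < L0 + M := by linarith [(hs.succ 0).1, (hs.succ 0).2.1]
      exact nonpos_of_mul_nonpos_left (by rw [mul_comm]; simpa using hk) (by positivity)
    have h10 : β (0 + 1) = β 0 := eq_of_sum_sq_sub_nonpos (by simpa using (hΔ 0).trans hK)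
    obtain ⟨ξ, hξ, hbound⟩ := hω 0
    rw [h10] at hξ hbound
    refine ⟨ξ, hξ, hbound.trans ?_⟩
    simp [norm2, hε]
  · obtain ⟨ξ, hξ, hbound⟩ := hω m
    push_cast at hk
    refine ⟨ξ, hξ, hbound.trans (mul_le_of_mul_sq_le (by positivity) hε ?_ hk)⟩
    rw [norm2_sq]
    exact hΔ m

end IsLAMMSequence

/-- Theorem 3.1: sublinear iteration complexity of the LAMM
algorithm in the contraction stage. -/
theorem statement_8 :
    ∀ A R : ℝ, 0 < A → 0 < R →
    ∃ C1 : ℝ, 0 < C1 ∧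
      ∀ (n d : ℕ) (y : Fin n → ℝ) (X : Fin n → Fin d → ℝ)
        (τ lam φ0 γu L0 : ℝ) (βs : Fin d → ℝ) (S : Finset (Fin d))
        (β : ℕ → Fin d → ℝ) (φ : ℕ → ℝ),
        0 < τ → 0 < lam → 0 < φ0 → 1 < γu → 0 < L0 →
        γu * L0 / φ0 = R →
        (∀ j ∉ S, βs j = 0) →
        (∀ β1 β2 : Fin d → ℝ,
          normInf (fun j => empGrad y X τ β1 j - empGrad y X τ β2 j) ≤
            L0 * norm2 (fun j => β1 j - β2 j)) →
        β 0 = (fun _ => 0) →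
        (∀ k : ℕ, 1 ≤ k →
          φ0 ≤ φ k ∧ φ k ≤ γu * L0 ∧
          (∀ b : Fin d → ℝ,
            Fmaj y X τ (φ k) (β (k - 1)) (β k) + lam * norm1 (β k) ≤
              Fmaj y X τ (φ k) (β (k - 1)) b + lam * norm1 b) ∧
          empLoss y X τ (β k) ≤ Fmaj y X τ (φ k) (β (k - 1)) (β k)) →
        (∃ βh : Fin d → ℝ,
          (∀ b : Fin d → ℝ, empLoss y X τ βh + lam * norm1 βh ≤
            empLoss y X τ b + lam * norm1 b) ∧
          norm2 (fun j => βh j - βs j) ≤ A * Real.sqrt S.card * lam) →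
        ∀ εc : ℝ, 0 < εc → ∀ k : ℕ,
          C1 * L0 ^ 2 * (1 + γu) ^ 2 *
              (norm2 βs + Real.sqrt S.card * lam) ^ 2 / εc ^ 2 ≤ k →
          ∃ ξ ∈ l1Subdiff (β k),
            normInf (fun j => empGrad y X τ (β k) j + lam * ξ j) ≤ εc := by
  intro A R hA hRpos
  refine ⟨(A + 1) ^ 2 * (4 + 2 * R), by positivity, ?_⟩
  rintro n d y X τ lam φ0 γu L0 βs S β φ hτ hlam hφ0 - hL0 hRdef - hLip hβ0 hseq
    ⟨βh, hβh, hβhβs⟩ εc hεc k hk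
  have hs : IsLAMMSequence y X τ lam φ0 (γu * L0) β φ := hseq
  set B := norm2 βs + Real.sqrt S.card * lam
  have hβhB : norm2 βh ≤ (A + 1) * B := by
    have := norm2_le_add_of_norm2_sub_le hβhβs
    nlinarith [mul_nonneg hA.le (norm2_nonneg βs),
      mul_nonneg (Real.sqrt_nonneg (S.card : ℝ)) hlam.le]
  have hD0 : ∑ j, (βh j - β 0 j) ^ 2 ≤ ((A + 1) * B) ^ 2 := by
    simpa only [hβ0, sub_zero, norm2_sq] using pow_le_pow_left₀ (norm2_nonneg βh) hβhB 2
  refine hs.exists_l1Subdiff_normInf_le_of_le hτ.le hlam hφ0 hβh hL0.le hLip hεc.le ?_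
  rw [div_le_iff₀ (by positivity)] at hk
  calc (L0 + γu * L0) ^ 2 * ((4 + 2 * (γu * L0 / φ0)) * ∑ j, (βh j - β 0 j) ^ 2)
      ≤ (L0 + γu * L0) ^ 2 * ((4 + 2 * R) * ((A + 1) * B) ^ 2) := by rw [hRdef]; gcongr
    _ ≤ k * εc ^ 2 := by linarith
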